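/- arXiv:2203.04677 — 3 statements merged into one kernel-verified Lean document; each statement's English description precedes it below -/
import Mathlib

section
/- Let a, a₁, b₁ be positive integers and set r = a·b₁ − a₁ (assumed positive). Let 𝕊¹ = {u ∈ ℂ : |u| = 1} and define π′ : ℂ × ℂ × 𝕊¹ → ℂ × ℂ × 𝕊¹ by π′(p, q₁, u) = (u^r p, u⁻¹q₁, u^{−a}). Then π′ is surjective, and π′(p, q₁, u) = π′(p′, q₁′, u′) if and only if there exists ε ∈ ℂ with ε^a = 1 such that p′ = ε^{a₁}p, q₁′ = εq₁ and u′ = εu. -/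
/-!
The fibre of `π′` through `(p, q₁, u)` is read off from the last coordinate: `u′ = εu`
with `ε = u′/u`, and `u′^{-a} = u^{-a}` forces `ε^a = 1`. Since `a ∣ r + a₁`, such an `ε`
satisfies `ε^{-r} = ε^{a₁}`, which turns `u′^r p′ = u^r p` into `p′ = ε^{a₁} p`.
Surjectivity only needs an `a`-th root of `u′⁻¹` on the unit circle.
-/

section FoldMap

variable {K : Type*} [Field K]

def foldMap (a r : ℕ) (p q u : K) : K × K × K := (u ^ r * p, u⁻¹ * q, (u ^ a)⁻¹)

variable {a a₁ r : ℕ} {ε : K}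

lemma pow_mul_pow_eq_one_of_dvd (hε : ε ^ a = 1) (hdvd : a ∣ r + a₁) :
    ε ^ r * ε ^ a₁ = 1 := by
  obtain ⟨k, hk⟩ := hdvd
  rw [← pow_add, hk, pow_mul, hε, one_pow]

lemma foldMap_rootOfUnity_smul (hdvd : a ∣ r + a₁) (hε : ε ^ a = 1) (hε0 : ε ≠ 0)
    (p q u : K) :
    foldMap a r (ε ^ a₁ * p) (ε * q) (ε * u) = foldMap a r p q u := by
  have hεr := pow_mul_pow_eq_one_of_dvd hε hdvd
  simp only [foldMap, Prod.mk.injEq, mul_pow, hε, one_mul]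
  refine ⟨by linear_combination (u ^ r * p) * hεr, by field_simp, trivial⟩

lemma exists_rootOfUnity_of_foldMap_eq (hdvd : a ∣ r + a₁) {p q u p' q' u' : K}
    (hu : u ≠ 0) (hu' : u' ≠ 0) (h : foldMap a r p q u = foldMap a r p' q' u') :
    ∃ ε : K, ε ^ a = 1 ∧ p' = ε ^ a₁ * p ∧ q' = ε * q ∧ u' = ε * u := by
  simp only [foldMap, Prod.mk.injEq, inv_inj] at h
  obtain ⟨hp, hq, hpow⟩ := h
  have hε : (u' / u) ^ a = 1 := by rw [div_pow, hpow, div_self (pow_ne_zero a hu')]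
  have hεr := pow_mul_pow_eq_one_of_dvd hε hdvd
  refine ⟨u' / u, hε, ?_, ?_, by field_simp⟩
  · have hinv : (u' / u) ^ a₁ = u ^ r / u' ^ r := by
      rw [eq_div_iff (pow_ne_zero r hu'), ← div_mul_cancel₀ (u' ^ r) (pow_ne_zero r hu),
        ← div_pow]
      linear_combination (u ^ r) * hεr
    rw [hinv, div_mul_eq_mul_div, hp]
    field_simp
  · field_simp at hq ⊢
    linear_combination -hq

theorem foldMap_eq_foldMap_iff (hdvd : a ∣ r + a₁) {p q u p' q' u' : K}
    (hu : u ≠ 0) (hu' : u' ≠ 0) :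
    foldMap a r p q u = foldMap a r p' q' u' ↔
      ∃ ε : K, ε ^ a = 1 ∧ p' = ε ^ a₁ * p ∧ q' = ε * q ∧ u' = ε * u := by
  refine ⟨exists_rootOfUnity_of_foldMap_eq hdvd hu hu', ?_⟩
  rintro ⟨ε, hε, rfl, rfl, rfl⟩
  exact (foldMap_rootOfUnity_smul hdvd hε (left_ne_zero_of_mul hu') p q u).symm

lemma foldMap_eq_of_pow_eq_inv {u u' : K} (hu : u ≠ 0) (hpow : u ^ a = u'⁻¹) (p' q' : K) :
    foldMap a r ((u ^ r)⁻¹ * p') (u * q') u = (p', q', u') := by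
  simp only [foldMap, Prod.mk.injEq, hpow, inv_inv]
  exact ⟨by field_simp, by field_simp, trivial⟩

end FoldMap

lemma Complex.exists_pow_eq_of_norm_eq_one {n : ℕ} (hn : n ≠ 0) {w : ℂ} (hw : ‖w‖ = 1) :
    ∃ z : ℂ, ‖z‖ = 1 ∧ z ^ n = w := by
  obtain ⟨z, hz⟩ := IsAlgClosed.exists_pow_nat_eq w (Nat.pos_of_ne_zero hn)
  refine ⟨z, ?_, hz⟩
  rw [← pow_eq_one_iff_of_nonneg (norm_nonneg z) hn, ← norm_pow, hz, hw]

theorem stmt_11_general (a a₁ b₁ : ℕ) (ha : 0 < a)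
    (r : ℕ) (hrel : (r : ℤ) = a * b₁ - a₁) :
    (∀ p' q₁' u' : ℂ, ‖u'‖ = 1 →
      ∃ p q₁ u : ℂ, ‖u‖ = 1 ∧
        (u ^ r * p, u⁻¹ * q₁, (u ^ a)⁻¹) = (p', q₁', u')) ∧
    (∀ p q₁ u p' q₁' u' : ℂ, ‖u‖ = 1 → ‖u'‖ = 1 →
      ((u ^ r * p, u⁻¹ * q₁, (u ^ a)⁻¹) = (u' ^ r * p', u'⁻¹ * q₁', (u' ^ a)⁻¹) ↔
        ∃ ε : ℂ, ε ^ a = 1 ∧ p' = ε ^ a₁ * p ∧ q₁' = ε * q₁ ∧ u' = ε * u)) := by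
  have hdvd : a ∣ r + a₁ := ⟨b₁, by omega⟩
  have ne_zero_of_norm_eq_one {z : ℂ} (hz : ‖z‖ = 1) : z ≠ 0 :=
    norm_ne_zero_iff.mp (by rw [hz]; exact one_ne_zero)
  refine ⟨fun p' q₁' u' hu' => ?_, fun p q₁ u p' q₁' u' hu hu' =>
    foldMap_eq_foldMap_iff hdvd (ne_zero_of_norm_eq_one hu) (ne_zero_of_norm_eq_one hu')⟩
  obtain ⟨u, hu, hpow⟩ := Complex.exists_pow_eq_of_norm_eq_one ha.ne' (w := u'⁻¹) (by simp [hu'])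
  exact ⟨_, _, u, hu, foldMap_eq_of_pow_eq_inv (ne_zero_of_norm_eq_one hu) hpow p' q₁'⟩

/-- With `r = a·b₁ − a₁ > 0`, the map `π′(p, q₁, u) = (u^r p, u⁻¹q₁, u^{−a})` on
`ℂ × ℂ × 𝕊¹` is surjective, and `π′(p, q₁, u) = π′(p′, q₁′, u′)` iff there is `ε` with
`ε^a = 1`, `p′ = ε^{a₁}p`, `q₁′ = εq₁`, `u′ = εu`. -/
theorem stmt_11 (a a₁ b₁ : ℕ) (ha : 0 < a) (ha₁ : 0 < a₁) (hb₁ : 0 < b₁)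
    (r : ℕ) (hr : 0 < r) (hrel : (r : ℤ) = a * b₁ - a₁) :
    (∀ p' q₁' u' : ℂ, ‖u'‖ = 1 →
      ∃ p q₁ u : ℂ, ‖u‖ = 1 ∧
        (u ^ r * p, u⁻¹ * q₁, (u ^ a)⁻¹) = (p', q₁', u')) ∧
    (∀ p q₁ u p' q₁' u' : ℂ, ‖u‖ = 1 → ‖u'‖ = 1 →
      ((u ^ r * p, u⁻¹ * q₁, (u ^ a)⁻¹) = (u' ^ r * p', u'⁻¹ * q₁', (u' ^ a)⁻¹) ↔
        ∃ ε : ℂ, ε ^ a = 1 ∧ p' = ε ^ a₁ * p ∧ q₁' = ε * q₁ ∧ u' = ε * u)) :=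
  stmt_11_general a a₁ b₁ ha r hrel
end

section
/- Let a, a₁, b be positive integers with r = a·b − a₁ positive. Define G on A = {(p, q₁, q₂) ∈ ℂ³ : |q₁| = 1, q₂ ≠ 0} by G(p, q₁, q₂) = (q₂⁻¹, q₁, p|q₂|²(q₂/|q₂|)^b). Then: (i) G is a bijection from A onto B = {(x, y, z) ∈ ℂ³ : x ≠ 0, |y| = 1}; (ii) G(0, λ, μ) = (μ⁻¹, λ, 0) for all λ with |λ| = 1 and μ ≠ 0; (iii) for every t ∈ ℂ with |t| = 1, writing (x, y, z) = G(p, q₁, q₂), one has G(t^r p, t⁻¹q₁, t^{−a}q₂) = (t^a x, t⁻¹y, t^{−a₁}z). -/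
/-! `G` is `(p, q₁, q₂) ↦ (q₂⁻¹, q₁, p · φ(q₂))` with `φ(s) = |s|² (s/|s|)^b` nonvanishing on `ℂ*`,
so it is inverted by `(x, y, z) ↦ (z / φ(x⁻¹), y, x⁻¹)`. Since `φ(u s) = u^b φ(s)` for `|u| = 1`,
the weight of the third coordinate changes from `r` to `r - a b = -a₁`. -/

/-- The transition map `G(p, q₁, q₂) = (q₂⁻¹, q₁, p|q₂|²(q₂/|q₂|)^b)`. -/
noncomputable def G14 (b : ℕ) (x : ℂ × ℂ × ℂ) : ℂ × ℂ × ℂ :=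
  (x.2.2⁻¹, x.2.1,
    x.1 * (‖x.2.2‖ : ℂ) ^ 2 * (x.2.2 / (‖x.2.2‖ : ℂ)) ^ b)

namespace G14

noncomputable def factor (b : ℕ) (s : ℂ) : ℂ := (‖s‖ : ℂ) ^ 2 * (s / (‖s‖ : ℂ)) ^ b

noncomputable def inv (b : ℕ) (x : ℂ × ℂ × ℂ) : ℂ × ℂ × ℂ :=
  (x.2.2 / factor b x.1⁻¹, x.2.1, x.1⁻¹)

theorem apply_eq (b : ℕ) (x : ℂ × ℂ × ℂ) :
    G14 b x = (x.2.2⁻¹, x.2.1, x.1 * factor b x.2.2) := by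
  rw [G14, factor, mul_assoc]

theorem factor_ne_zero (b : ℕ) {s : ℂ} (hs : s ≠ 0) : factor b s ≠ 0 := by
  have hn : (‖s‖ : ℂ) ≠ 0 := Complex.ofReal_ne_zero.mpr (norm_ne_zero_iff.mpr hs)
  exact mul_ne_zero (pow_ne_zero _ hn) (pow_ne_zero _ (div_ne_zero hs hn))

theorem factor_mul_of_norm_eq_one (b : ℕ) {u : ℂ} (hu : ‖u‖ = 1) (s : ℂ) :
    factor b (u * s) = u ^ b * factor b s := by
  simp only [factor, norm_mul, hu, one_mul, mul_div_assoc, mul_pow]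
  ring

theorem leftInvOn (b : ℕ) :
    Set.LeftInvOn (inv b) (G14 b) {x | ‖x.2.1‖ = 1 ∧ x.2.2 ≠ 0} := by
  rintro ⟨p, q₁, q₂⟩ ⟨-, hq₂⟩
  simp [apply_eq, inv, factor_ne_zero b hq₂]

theorem rightInvOn (b : ℕ) :
    Set.RightInvOn (inv b) (G14 b) {x | x.1 ≠ 0 ∧ ‖x.2.1‖ = 1} := by
  rintro ⟨x, y, z⟩ ⟨hx, -⟩
  simp [apply_eq, inv, factor_ne_zero b (inv_ne_zero hx)]

theorem bijOn (b : ℕ) :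
    Set.BijOn (G14 b) {x | ‖x.2.1‖ = 1 ∧ x.2.2 ≠ 0} {x | x.1 ≠ 0 ∧ ‖x.2.1‖ = 1} := by
  refine Set.InvOn.bijOn ⟨leftInvOn b, rightInvOn b⟩ ?_ ?_
  · rintro ⟨p, q₁, q₂⟩ ⟨hq₁, hq₂⟩
    exact ⟨inv_ne_zero hq₂, hq₁⟩
  · rintro ⟨x, y, z⟩ ⟨hx, hy⟩
    exact ⟨hy, inv_ne_zero hx⟩

end G14

theorem pow_mul_inv_pow_pow_eq_inv_pow {G₀ : Type*} [GroupWithZero G₀] {t : G₀} (ht : t ≠ 0)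
    {a a₁ b r : ℕ} (hrel : (r : ℤ) = a * b - a₁) :
    t ^ r * ((t ^ a)⁻¹) ^ b = (t ^ a₁)⁻¹ := by
  rw [← inv_pow, ← pow_mul, inv_pow, ← zpow_natCast, ← zpow_natCast, ← zpow_natCast,
    ← zpow_neg, ← zpow_neg, ← zpow_add₀ ht]
  congr 1
  push_cast
  linarith

theorem stmt_14_general (a a₁ b : ℕ)
    (r : ℕ) (hrel : (r : ℤ) = a * b - a₁) :
    Set.BijOn (G14 b) {x : ℂ × ℂ × ℂ | ‖x.2.1‖ = 1 ∧ x.2.2 ≠ 0}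
      {x : ℂ × ℂ × ℂ | x.1 ≠ 0 ∧ ‖x.2.1‖ = 1} ∧
    (∀ lam mu : ℂ, ‖lam‖ = 1 → mu ≠ 0 → G14 b (0, lam, mu) = (mu⁻¹, lam, 0)) ∧
    (∀ t : ℂ, ‖t‖ = 1 →
      ∀ x ∈ {x : ℂ × ℂ × ℂ | ‖x.2.1‖ = 1 ∧ x.2.2 ≠ 0},
        G14 b (t ^ r * x.1, t⁻¹ * x.2.1, (t ^ a)⁻¹ * x.2.2) =
          (t ^ a * (G14 b x).1, t⁻¹ * (G14 b x).2.1, (t ^ a₁)⁻¹ * (G14 b x).2.2)) := by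
  refine ⟨G14.bijOn b, fun lam mu _ _ => by simp [G14.apply_eq], ?_⟩
  rintro t ht ⟨p, q₁, q₂⟩ -
  have ht₀ : t ≠ 0 := norm_ne_zero_iff.mp (by simp [ht])
  have hu : ‖(t ^ a)⁻¹‖ = 1 := by simp [ht]
  simp only [G14.apply_eq, G14.factor_mul_of_norm_eq_one b hu, mul_inv, inv_inv, Prod.mk.injEq,
    true_and, ← pow_mul_inv_pow_pow_eq_inv_pow ht₀ hrel]
  ring

/-- With `r = a·b − a₁ > 0`: (i) `G` is a bijection from
`A = {(p,q₁,q₂) : |q₁| = 1, q₂ ≠ 0}` onto `B = {(x,y,z) : x ≠ 0, |y| = 1}`;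
(ii) `G(0, λ, μ) = (μ⁻¹, λ, 0)` for `|λ| = 1`, `μ ≠ 0`;
(iii) `G` intertwines `t·(p,q₁,q₂) = (t^r p, t⁻¹q₁, t^{−a}q₂)` with
`t·(x,y,z) = (t^a x, t⁻¹y, t^{−a₁}z)`. -/
theorem stmt_14 (a a₁ b : ℕ) (ha : 0 < a) (ha₁ : 0 < a₁) (hb : 0 < b)
    (r : ℕ) (hr : 0 < r) (hrel : (r : ℤ) = a * b - a₁) :
    Set.BijOn (G14 b) {x : ℂ × ℂ × ℂ | ‖x.2.1‖ = 1 ∧ x.2.2 ≠ 0}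
      {x : ℂ × ℂ × ℂ | x.1 ≠ 0 ∧ ‖x.2.1‖ = 1} ∧
    (∀ lam mu : ℂ, ‖lam‖ = 1 → mu ≠ 0 → G14 b (0, lam, mu) = (mu⁻¹, lam, 0)) ∧
    (∀ t : ℂ, ‖t‖ = 1 →
      ∀ x ∈ {x : ℂ × ℂ × ℂ | ‖x.2.1‖ = 1 ∧ x.2.2 ≠ 0},
        G14 b (t ^ r * x.1, t⁻¹ * x.2.1, (t ^ a)⁻¹ * x.2.2) =
          (t ^ a * (G14 b x).1, t⁻¹ * (G14 b x).2.1, (t ^ a₁)⁻¹ * (G14 b x).2.2)) :=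
  stmt_14_general a a₁ b r hrel
end

section
/- Let a, a₁, b₁ be positive integers with r = a·b₁ − a₁ positive. Define π′(p, q₁, u) = (u^r p, u⁻¹q₁, u^{−a}) on ℂ × ℂ × 𝕊¹, f(p, q₁, q₂) = (p|q₁|, q₁/|q₁|, q₂/|q₁|) on triples with q₁ ≠ 0 and |q₂| = 1, and π̃(x, y₁, y₂) = (y₁^r x, y₁⁻¹, y₂y₁^{−a}) on triples with |y₁| = 1, where 𝕊¹ = {u ∈ ℂ : |u| = 1}. Then for every p ∈ ℂ, q₁ ∈ ℂ with q₁ ≠ 0, and u ∈ 𝕊¹, the composition satisfies π̃(f(π′(p, q₁, u))) = ( p|q₁|(q₁/|q₁|)^r , (|q₁|/q₁)·u , q₁^{−a}|q₁|^{a−1} ). -/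
/-- `π′(p, q₁, u) = (u^r p, u⁻¹q₁, u^{−a})`. -/
noncomputable def piPrime19 (r a : ℕ) (x : ℂ × ℂ × ℂ) : ℂ × ℂ × ℂ :=
  (x.2.2 ^ r * x.1, x.2.2⁻¹ * x.2.1, (x.2.2 ^ a)⁻¹)

/-- The gluing map `f(p, q₁, q₂) = (p|q₁|, q₁/|q₁|, q₂/|q₁|)`. -/
noncomputable def f19 (x : ℂ × ℂ × ℂ) : ℂ × ℂ × ℂ :=
  (x.1 * (‖x.2.1‖ : ℂ), x.2.1 / (‖x.2.1‖ : ℂ),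
    x.2.2 / (‖x.2.1‖ : ℂ))

/-- `π̃(x, y₁, y₂) = (y₁^r x, y₁⁻¹, y₂y₁^{−a})`. -/
noncomputable def piTilde19 (r a : ℕ) (x : ℂ × ℂ × ℂ) : ℂ × ℂ × ℂ :=
  (x.2.1 ^ r * x.1, x.2.1⁻¹, x.2.2 * (x.2.1 ^ a)⁻¹)

/-! Since `|u| = 1`, `π′` does not change `|q₁|`, so `f ∘ π′` only rescales by the constant
`m = |q₁|`. What remains is a rational identity in `u`, `q₁` and `m`, valid for any nonzero
`m`: the powers of `u` introduced by `π′` cancel against those of `y₁ = u⁻¹q₁/m` in `π̃`. -/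

theorem f19_piPrime19 (r a : ℕ) (p q u : ℂ) (hu : ‖u‖ = 1) :
    f19 (piPrime19 r a (p, q, u)) =
      (u ^ r * p * (‖q‖ : ℂ), u⁻¹ * q / (‖q‖ : ℂ), (u ^ a)⁻¹ / (‖q‖ : ℂ)) := by
  simp [piPrime19, f19, hu]

theorem piTilde19_rescale {r a : ℕ} (ha : a ≠ 0) {p q u m : ℂ} (hq : q ≠ 0) (hu : u ≠ 0)
    (hm : m ≠ 0) :
    piTilde19 r a (u ^ r * p * m, u⁻¹ * q / m, (u ^ a)⁻¹ / m) =
      (p * m * (q / m) ^ r, m / q * u, (q ^ a)⁻¹ * m ^ (a - 1)) := by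
  simp only [piTilde19, Prod.mk.injEq]
  refine ⟨?_, by field_simp, ?_⟩
  · rw [div_pow, div_pow, mul_pow, inv_pow]
    field_simp
  · rw [div_pow, ← pow_sub_one_mul ha m, mul_pow, inv_pow]
    field_simp

theorem stmt_19_general (a : ℕ) (ha : 0 < a)
    (r : ℕ)
    (p q₁ u : ℂ) (hq₁ : q₁ ≠ 0) (hu : ‖u‖ = 1) :
    piTilde19 r a (f19 (piPrime19 r a (p, q₁, u))) =
      (p * (‖q₁‖ : ℂ) * (q₁ / (‖q₁‖ : ℂ)) ^ r,
        ((‖q₁‖ : ℂ) / q₁) * u,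
        (q₁ ^ a)⁻¹ * (‖q₁‖ : ℂ) ^ (a - 1)) := by
  have hu₀ : u ≠ 0 := ne_zero_of_norm_ne_zero (by simp [hu])
  have hm : (‖q₁‖ : ℂ) ≠ 0 := Complex.ofReal_ne_zero.mpr (norm_ne_zero_iff.mpr hq₁)
  rw [f19_piPrime19 r a p q₁ u hu, piTilde19_rescale ha.ne' hq₁ hu₀ hm]

/-- With `r = a·b₁ − a₁ > 0`, for `q₁ ≠ 0` and `|u| = 1`:
`π̃(f(π′(p, q₁, u))) = (p|q₁|(q₁/|q₁|)^r, (|q₁|/q₁)·u, q₁^{−a}|q₁|^{a−1})`. -/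
theorem stmt_19 (a a₁ b₁ : ℕ) (ha : 0 < a) (ha₁ : 0 < a₁) (hb₁ : 0 < b₁)
    (r : ℕ) (hr : 0 < r) (hrel : (r : ℤ) = a * b₁ - a₁)
    (p q₁ u : ℂ) (hq₁ : q₁ ≠ 0) (hu : ‖u‖ = 1) :
    piTilde19 r a (f19 (piPrime19 r a (p, q₁, u))) =
      (p * (‖q₁‖ : ℂ) * (q₁ / (‖q₁‖ : ℂ)) ^ r,
        ((‖q₁‖ : ℂ) / q₁) * u,
        (q₁ ^ a)⁻¹ * (‖q₁‖ : ℂ) ^ (a - 1)) :=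
  stmt_19_general a ha r p q₁ u hq₁ hu
end
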